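/- If F = (X; f₁,…,f_N) is a point-fibred IFS on a compact Hausdorff space X with coding map π, then for every nonempty compact subset B ⊆ X and every σ ∈ I^∞, the sets f_{σ|k}(B) = f_{σ₁} ∘ f_{σ₂} ∘ ⋯ ∘ f_{σ_k}(B) converge to the singleton {π(σ)} in the Vietoris topology on K(X) as k → ∞. -/

import Mathlib

open Set Topology Filter

/-- `seqComp f σ k` is the composition `f_{σ|k} = f_{σ₁} ∘ f_{σ₂} ∘ ⋯ ∘ f_{σ_k}`
(with the sequence `σ` indexed from `0`). -/
def seqComp {X : Type*} {N : ℕ} (f : Fin N → X → X) (σ : ℕ → Fin N) : ℕ → X → X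
  | 0 => id
  | k + 1 => seqComp f σ k ∘ f (σ k)

/-- `PiMap f σ = ⋂_{k ≥ 1} f_{σ₁} ∘ ⋯ ∘ f_{σ_k}(X)`. -/
def PiMap {X : Type*} {N : ℕ} (f : Fin N → X → X) (σ : ℕ → Fin N) : Set X :=
  ⋂ k : ℕ, seqComp f σ (k + 1) '' Set.univ

/-- The Vietoris topology (on all subsets of `X`; the Vietoris topology on the
nonempty compact subsets `K(X)` is the subspace topology it induces): it is generated
by the sets `{B | B ⊆ U}` and `{B | B ∩ U ≠ ∅}` for `U ⊆ X` open. -/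
def vietoris (X : Type*) [TopologicalSpace X] : TopologicalSpace (Set X) :=
  TopologicalSpace.generateFrom
    ({S | ∃ U : Set X, IsOpen U ∧ S = {B : Set X | B ⊆ U}} ∪
     {S | ∃ U : Set X, IsOpen U ∧ S = {B : Set X | (B ∩ U).Nonempty}})

/-! The ranges of `f_{σ|k}` form a decreasing sequence of compact sets whose intersection is
`PiMap f σ = {π σ}`; by compactness they eventually lie in any neighbourhood of `π σ`. Every
subbasic Vietoris neighbourhood of a singleton `{x}` is of the form `{B | B ⊆ U}` or
`{B | (B ∩ U).Nonempty}` with `x ∈ U`, and nonempty sets contained in `U` lie in both. -/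

theorem tendsto_vietoris_singleton {X α : Type*} [TopologicalSpace X] {l : Filter α}
    {S : α → Set X} {x : X} (hne : ∀ᶠ a in l, (S a).Nonempty)
    (hsub : ∀ U ∈ 𝓝 x, ∀ᶠ a in l, S a ⊆ U) :
    Tendsto S l (@nhds (Set X) (vietoris X) {x}) := by
  rw [vietoris, TopologicalSpace.tendsto_nhds_generateFrom_iff]
  rintro s (⟨U, hU, rfl⟩ | ⟨U, hU, rfl⟩) hxU
  · exact hsub U (hU.mem_nhds (hxU rfl))
  · have hx : x ∈ U := by simpa using hxU
    filter_upwards [hne, hsub U (hU.mem_nhds hx)] with a ⟨y, hy⟩ hSU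
    exact ⟨y, hy, hSU hy⟩

section seqComp

variable {X : Type*} {N : ℕ} {f : Fin N → X → X} {σ : ℕ → Fin N}

theorem continuous_seqComp [TopologicalSpace X] (hf : ∀ i, Continuous (f i)) (k : ℕ) :
    Continuous (seqComp f σ k) := by
  induction k with
  | zero => exact continuous_id
  | succ k ih => exact ih.comp (hf _)

theorem antitone_range_seqComp : Antitone fun k => range (seqComp f σ k) :=
  antitone_nat_of_succ_le fun k => range_comp_subset_range (f (σ k)) (seqComp f σ k)

theorem PiMap_eq_iInter_range : PiMap f σ = ⋂ k : ℕ, range (seqComp f σ (k + 1)) := by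
  simp only [PiMap, image_univ]

theorem eventually_range_seqComp_subset [TopologicalSpace X] [CompactSpace X] [T2Space X]
    (hf : ∀ i, Continuous (f i)) {U : Set X} (hU : ∀ x ∈ PiMap f σ, U ∈ 𝓝 x) :
    ∀ᶠ k in atTop, range (seqComp f σ k) ⊆ U := by
  rw [PiMap_eq_iInter_range] at hU
  obtain ⟨i, hi⟩ := exists_subset_nhds_of_isCompact
    (antitone_range_seqComp.comp_monotone fun _ _ => Nat.succ_le_succ).directed_ge
    (fun k => isCompact_range (continuous_seqComp hf (k + 1))) hU
  filter_upwards [eventually_ge_atTop (i + 1)] with k hk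
  exact (antitone_range_seqComp hk).trans hi

end seqComp

theorem seqComp_image_tendsto_singleton_general
    {X : Type*} [TopologicalSpace X] [CompactSpace X] [T2Space X]
    {N : ℕ} (f : Fin N → X → X) (hf : ∀ i, Continuous (f i))
    (π : (ℕ → Fin N) → X) (hπ : ∀ σ, PiMap f σ = {π σ}) :
    ∀ B : Set X, B.Nonempty → IsCompact B → ∀ σ : ℕ → Fin N,
      Filter.Tendsto (fun k => seqComp f σ k '' B)
        Filter.atTop (@nhds (Set X) (vietoris X) ({π σ} : Set X)) := by
  intro B hB _ σ
  refine tendsto_vietoris_singleton (.of_forall fun k => hB.image _) fun U hU => ?_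
  have hUPi : ∀ x ∈ PiMap f σ, U ∈ 𝓝 x := by
    rw [hπ σ]
    rintro x rfl
    exact hU
  filter_upwards [eventually_range_seqComp_subset hf hUPi] with k hk
  exact (image_subset_range _ B).trans hk

/-- If `F` is a point-fibred IFS on a compact Hausdorff space `X` with
coding map `π`, then for every nonempty compact `B ⊆ X` and every `σ ∈ I^∞`, the sets
`f_{σ|k}(B)` converge to the singleton `{π σ}` in the Vietoris topology as `k → ∞`. -/
theorem seqComp_image_tendsto_singleton
    {X : Type*} [TopologicalSpace X] [CompactSpace X] [T2Space X] [Nonempty X]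
    {N : ℕ} (f : Fin N → X → X) (hf : ∀ i, Continuous (f i))
    (π : (ℕ → Fin N) → X) (hπ : ∀ σ, PiMap f σ = {π σ}) :
    ∀ B : Set X, B.Nonempty → IsCompact B → ∀ σ : ℕ → Fin N,
      Filter.Tendsto (fun k => seqComp f σ k '' B)
        Filter.atTop (@nhds (Set X) (vietoris X) ({π σ} : Set X)) :=
  seqComp_image_tendsto_singleton_general f hf π hπ
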